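/- Let (Ω, ℱ, Q) be a probability space with filtration 𝔽 = (ℱ_t)_{t∈[0,∞)}, let Λ = (Λ_t)_{t∈[0,∞)} be a nonnegative supermartingale with respect to 𝔽 under Q with Λ_0 = 1 Q-almost surely, and let 𝒯 : Ω → [0,∞] be a stopping time of 𝔽 such that for every T ∈ [0,∞) one has Λ_T = 0 Q-almost surely on the event {𝒯 ≤ T}. Suppose P is a probability measure on (Ω, ℱ) satisfying the Wald-type identity P(𝒯 > T) = E^Q[Λ_T · 1_{𝒯 > T}] for every T ∈ [0,∞). Then Λ is a martingale with respect to 𝔽 under Q if and only if P(𝒯 < ∞) = 0. -/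

import Mathlib

open MeasureTheory
open scoped NNReal ENNReal

/-! A supermartingale is a martingale exactly when its expectation is constant, and by the
vanishing of `Λ` on `{𝒯 ≤ T}` and the Wald identity, `E^Q[Λ_T] = P(𝒯 > T)`. Since `E^Q[Λ_0] = 1`,
`Λ` is a martingale iff `P(𝒯 ≤ T) = 0` for every `T`, i.e. iff `P(𝒯 < ∞) = 0`. -/

namespace MeasureTheory

variable {ι Ω : Type*} [Preorder ι] {m0 : MeasurableSpace Ω} {μ : Measure Ω}
  {ℱ : Filtration ι m0}

theorem Martingale.integral_eq {E : Type*} [NormedAddCommGroup E] [NormedSpace ℝ E]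
    [CompleteSpace E] [SigmaFiniteFiltration μ ℱ] {f : ι → Ω → E} (hf : Martingale f ℱ μ)
    {i j : ι} (hij : i ≤ j) : ∫ ω, f j ω ∂μ = ∫ ω, f i ω ∂μ :=
  (integral_condExp (ℱ.le i)).symm.trans (integral_congr_ae (hf.condExp_ae_eq hij))

theorem Supermartingale.martingale_of_integral_eq [SigmaFiniteFiltration μ ℱ]
    {f : ι → Ω → ℝ} (hf : Supermartingale f ℱ μ)
    (h : ∀ i j, i ≤ j → ∫ ω, f j ω ∂μ = ∫ ω, f i ω ∂μ) : Martingale f ℱ μ := by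
  refine ⟨hf.stronglyAdapted, fun i j hij => ?_⟩
  refine (integral_eq_iff_of_ae_le integrable_condExp (hf.integrable i)
    (hf.condExp_ae_le hij)).1 ?_
  rw [integral_condExp (ℱ.le i)]
  exact h i j hij

theorem Supermartingale.martingale_iff_integral_eq_bot [OrderBot ι] [SigmaFiniteFiltration μ ℱ]
    {f : ι → Ω → ℝ} (hf : Supermartingale f ℱ μ) :
    Martingale f ℱ μ ↔ ∀ i, ∫ ω, f i ω ∂μ = ∫ ω, f ⊥ ω ∂μ :=
  ⟨fun hM _ => hM.integral_eq bot_le,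
    fun h => hf.martingale_of_integral_eq fun i j _ => (h j).trans (h i).symm⟩

end MeasureTheory

theorem measure_setOf_lt_top_eq_zero_iff {Ω : Type*} {mΩ : MeasurableSpace Ω} {P : Measure Ω}
    [IsProbabilityMeasure P] {τ : Ω → ℝ≥0∞}
    (hτ : ∀ t : ℝ≥0, MeasurableSet {ω | τ ω ≤ t}) :
    P {ω | τ ω < ∞} = 0 ↔ ∀ t : ℝ≥0, P {ω | (t : ℝ≥0∞) < τ ω} = 1 := by
  have hgt : ∀ t : ℝ≥0, P {ω | (t : ℝ≥0∞) < τ ω} = 1 ↔ P {ω | τ ω ≤ t} = 0 := fun t => by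
    simpa only [Set.compl_ofPred, not_le] using prob_compl_eq_one_iff (hτ t)
  have hunion : {ω | τ ω < ∞} = ⋃ n : ℕ, {ω | τ ω ≤ ((n : ℝ≥0) : ℝ≥0∞)} := by
    ext ω
    simp only [Set.mem_ofPred_eq, Set.mem_iUnion, ENNReal.coe_natCast]
    exact ⟨fun h => (ENNReal.exists_nat_gt h.ne).imp fun _ => le_of_lt,
      fun ⟨n, hn⟩ => hn.trans_lt (ENNReal.natCast_lt_top n)⟩
  simp only [hgt]
  refine ⟨fun h t => measure_mono_null (fun ω hω => ?_) h, fun h => ?_⟩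
  · exact lt_of_le_of_lt hω ENNReal.coe_lt_top
  · rw [hunion]
    exact measure_iUnion_null fun n => h n

theorem stmt_0_general {Ω : Type*} {mΩ : MeasurableSpace Ω}
    (Q P : Measure Ω) [IsProbabilityMeasure Q] [IsProbabilityMeasure P]
    (ℱ : Filtration ℝ≥0 mΩ)
    (Λ : ℝ≥0 → Ω → ℝ)
    (hΛsup : Supermartingale Λ ℱ Q)
    (hΛ0 : Λ 0 =ᵐ[Q] fun _ => 1)
    (𝒯 : Ω → ℝ≥0∞)
    (h𝒯 : ∀ t : ℝ≥0, MeasurableSet[ℱ t] {ω | 𝒯 ω ≤ (t : ℝ≥0∞)})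
    (hvanish : ∀ T : ℝ≥0, ∀ᵐ ω ∂Q, 𝒯 ω ≤ (T : ℝ≥0∞) → Λ T ω = 0)
    (hWald : ∀ T : ℝ≥0,
      (P {ω | (T : ℝ≥0∞) < 𝒯 ω}).toReal = ∫ ω in {ω | (T : ℝ≥0∞) < 𝒯 ω}, Λ T ω ∂Q) :
    Martingale Λ ℱ Q ↔ P {ω | 𝒯 ω < ∞} = 0 := by
  have hexp : ∀ T : ℝ≥0, ∫ ω, Λ T ω ∂Q = (P {ω | (T : ℝ≥0∞) < 𝒯 ω}).toReal := fun T => by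
    rw [hWald T, setIntegral_eq_integral_of_ae_compl_eq_zero]
    filter_upwards [hvanish T] with ω hω hT using hω (not_lt.1 hT)
  have hexp_bot : ∫ ω, Λ ⊥ ω ∂Q = 1 := by
    simp [integral_congr_ae hΛ0]
  rw [hΛsup.martingale_iff_integral_eq_bot, measure_setOf_lt_top_eq_zero_iff
    fun t => ℱ.le t _ (h𝒯 t)]
  simp only [hexp_bot]
  simp only [hexp, ENNReal.toReal_eq_one_iff]

/-- **Lemma 1 of the paper.** A nonnegative supermartingale `Λ` with `Λ 0 = 1`,
vanishing at time `T` on the event `{𝒯 ≤ T}`, is a martingale under `Q` if and only if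
the measure `P` satisfying the Wald-type identity `P(𝒯 > T) = E^Q[Λ_T · 1_{𝒯 > T}]`
gives no mass to `{𝒯 < ∞}`. -/
theorem stmt_0 {Ω : Type*} {mΩ : MeasurableSpace Ω}
    (Q P : Measure Ω) [IsProbabilityMeasure Q] [IsProbabilityMeasure P]
    (ℱ : Filtration ℝ≥0 mΩ)
    (Λ : ℝ≥0 → Ω → ℝ)
    (hΛsup : Supermartingale Λ ℱ Q)
    (hΛnonneg : ∀ t : ℝ≥0, 0 ≤ᵐ[Q] Λ t)
    (hΛ0 : Λ 0 =ᵐ[Q] fun _ => 1)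
    (𝒯 : Ω → ℝ≥0∞)
    (h𝒯 : ∀ t : ℝ≥0, MeasurableSet[ℱ t] {ω | 𝒯 ω ≤ (t : ℝ≥0∞)})
    (hvanish : ∀ T : ℝ≥0, ∀ᵐ ω ∂Q, 𝒯 ω ≤ (T : ℝ≥0∞) → Λ T ω = 0)
    (hWald : ∀ T : ℝ≥0,
      (P {ω | (T : ℝ≥0∞) < 𝒯 ω}).toReal = ∫ ω in {ω | (T : ℝ≥0∞) < 𝒯 ω}, Λ T ω ∂Q) :
    Martingale Λ ℱ Q ↔ P {ω | 𝒯 ω < ∞} = 0 :=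
  stmt_0_general Q P ℱ Λ hΛsup hΛ0 𝒯 h𝒯 hvanish hWald
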